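/- Let G be a group, M a commutative group, and h : G × G → M a normalized 2-cocycle (h(a,b)·h(a·b,c) = h(a,b·c)·h(b,c) for all a, b, c, and h(1,1) = 1). Define H : G × G → M by H(f, g) = h(f, g)·h(f·g·f⁻¹, f)⁻¹. Then H is multiplicative in the first argument along conjugation: for all f, f', g ∈ G, H(f'·f, g) = H(f', f·g·f⁻¹) · H(f, g). Moreover H(1, g) = 1 for every g ∈ G. -/

import Mathlib

/-!
Writing `k = f g f⁻¹`, the identity `H(f' f, g) = H(f', k) H(f, g)` is the product of the
cocycle identity at the three triples `(f', f, g)`, `(f', k, f)` and `(f' k f'⁻¹, f', f)`,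
using `k f = f g`. Normalization needs only the cocycle identity at `(1, 1, g)` and
`(g, 1, 1)`, which give `h(1, g) = h(1, 1) = h(g, 1)`.
-/

section Transgression

variable {G M : Type*} [Group G] [CommGroup M]

def transgression (h : G × G → M) (f g : G) : M := h (f, g) / h (f * g * f⁻¹, f)

theorem transgression_mul {h : G × G → M}
    (hcoc : ∀ a b c : G, h (a, b) * h (a * b, c) = h (a, b * c) * h (b, c)) (f' f g : G) :
    transgression h (f' * f) g = transgression h f' (f * g * f⁻¹) * transgression h f g := by
  set k := f * g * f⁻¹
  have hkf : k * f = f * g := by simp [k]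
  have hconj : (f' * f) * g * (f' * f)⁻¹ = f' * k * f'⁻¹ := by simp [k, mul_assoc]
  have lhs_num : h (f' * f, g) = h (f', f * g) * h (f, g) / h (f', f) :=
    eq_div_of_mul_eq'' (hcoc f' f g)
  have lhs_den :
      h (f' * k * f'⁻¹, f' * f) = h (f' * k * f'⁻¹, f') * h (f' * k, f) / h (f', f) := by
    simpa only [inv_mul_cancel_right] using eq_div_of_mul_eq' (hcoc (f' * k * f'⁻¹) f' f).symm
  have rhs_num : h (f', k) = h (f', f * g) * h (k, f) / h (f' * k, f) :=
    eq_div_of_mul_eq' (hkf ▸ hcoc f' k f)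
  rw [transgression, transgression, transgression, hconj, lhs_num, lhs_den, rhs_num]
  apply Additive.ofMul.injective
  simp only [ofMul_mul, ofMul_div]
  abel

theorem transgression_one {h : G × G → M}
    (hcoc : ∀ a b c : G, h (a, b) * h (a * b, c) = h (a, b * c) * h (b, c)) (g : G) :
    transgression h 1 g = 1 := by
  have h_one_left : h (1, g) = h (1, 1) := by simpa using (hcoc 1 1 g).symm
  have h_one_right : h (g, 1) = h (1, 1) := by simpa using hcoc g 1 1
  simp [transgression, h_one_left, h_one_right]

end Transgression

theorem transgression_cocycle_general {G M : Type*} [Group G] [CommGroup M]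
    (h : G × G → M)
    (hcoc : ∀ a b c : G, h (a, b) * h (a * b, c) = h (a, b * c) * h (b, c))
    (H : G → G → M)
    (hH : ∀ f g : G, H f g = h (f, g) * (h (f * g * f⁻¹, f))⁻¹) :
    (∀ f f' g : G, H (f' * f) g = H f' (f * g * f⁻¹) * H f g) ∧
      (∀ g : G, H 1 g = 1) := by
  obtain rfl : H = transgression h := by
    funext f g
    rw [hH, transgression, div_eq_mul_inv]
  exact ⟨fun f f' g => transgression_mul hcoc f' f g, transgression_one hcoc⟩

/-- The transition datum `H(f,g) = h(f,g)·h(f·g·f⁻¹, f)⁻¹` (equation (14) of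
the paper) of the transgressed line bundle on the inertia groupoid is
multiplicative along conjugation, i.e. a 1-cocycle on the conjugation
groupoid: `H(f'·f, g) = H(f', f·g·f⁻¹)·H(f, g)`, and `H(1, g) = 1`. -/
theorem transgression_cocycle {G M : Type*} [Group G] [CommGroup M]
    (h : G × G → M)
    (hcoc : ∀ a b c : G, h (a, b) * h (a * b, c) = h (a, b * c) * h (b, c))
    (hnorm : h (1, 1) = 1)
    (H : G → G → M)
    (hH : ∀ f g : G, H f g = h (f, g) * (h (f * g * f⁻¹, f))⁻¹) :
    (∀ f f' g : G, H (f' * f) g = H f' (f * g * f⁻¹) * H f g) ∧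
      (∀ g : G, H 1 g = 1) :=
  transgression_cocycle_general h hcoc H hH
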